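/- arXiv:2603.01354 — 5 statements merged into one kernel-verified Lean document; each statement's English description precedes it below -/
import Mathlib

section
/- Let R be an associative unital ring, let u be a unit of R with underlying element P := ↑u, and let M ∈ R satisfy P*M − M*P = 1. Then for all l, l' ∈ ℤ one has (M*P^l)*(M*P^{l'}) − (M*P^{l'})*(M*P^l) = (l − l') • (M * P^{l+l'−1}). This is the paper's computation of the structure constants c_{1l,1l'}^{qr} = (l−l')·δ_{q,1}δ_{r,l+l'−1} in the w_∞-algebra relations for the additional symmetries of the KP-mKP hierarchy. -/
lemma ucast_comb {R : Type*} [Ring R] (u : Rˣ) (a b : ℤ) :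
    (↑(u ^ a) : R) * (↑(u ^ b) : R) = (↑(u ^ (a + b)) : R) := by
  rw [← Units.val_mul, ← zpow_add]

lemma ucast_congr {R : Type*} [Ring R] (u : Rˣ) {a b : ℤ} (hab : a = b) :
    (↑(u ^ a) : R) = (↑(u ^ b) : R) := by rw [hab]

lemma zpow_mul_M {R : Type*} [Ring R] (u : Rˣ) (M : R)
    (h : (↑u : R) * M - M * (↑u : R) = 1) :
    ∀ l : ℤ, (↑(u ^ l) : R) * M = M * (↑(u ^ l) : R) + l • (↑(u ^ (l - 1)) : R) := by
  have hP : (↑u : R) * M = M * (↑u : R) + 1 := by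
    rw [← h]; abel
  intro l
  induction l using Int.induction_on with
  | zero => simp
  | succ k ih =>
      have e0 : (↑(u ^ ((k : ℤ) + 1)) : R) = (↑u : R) * (↑(u ^ (k : ℤ)) : R) := by
        have t := ucast_comb u 1 (k : ℤ)
        simp only [zpow_one] at t
        exact (ucast_congr u (by ring : (k : ℤ) + 1 = 1 + k)).trans t.symm
      have e1 : (↑(u ^ ((k : ℤ) + 1 - 1)) : R) = (↑(u ^ (k : ℤ)) : R) :=
        ucast_congr u (by ring)
      have e2 : (↑u : R) * (↑(u ^ ((k : ℤ) - 1)) : R) = (↑(u ^ (k : ℤ)) : R) := by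
        have t := ucast_comb u 1 ((k : ℤ) - 1)
        simp only [zpow_one] at t
        exact t.trans (ucast_congr u (by ring))
      rw [e0, e1, mul_assoc, ih, mul_add, ← mul_assoc, hP, add_mul, one_mul,
        mul_smul_comm, e2, add_smul, one_smul, mul_assoc]
      abel
  | pred k ih =>
      have hui : (↑u : R) * (↑(u⁻¹) : R) = 1 := by rw [← Units.val_mul]; simp
      have hinv : (↑(u⁻¹) : R) = (↑(u ^ (-1 : ℤ)) : R) := by simp
      have h3 : (↑(u ^ (-(k : ℤ))) : R) * (↑(u⁻¹) : R) = (↑(u ^ (-(k : ℤ) - 1)) : R) := by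
        rw [hinv, ucast_comb]; exact ucast_congr u (by ring)
      have h4 : (↑(u ^ (-(k : ℤ) - 1)) : R) * (↑(u⁻¹) : R) = (↑(u ^ (-(k : ℤ) - 1 - 1)) : R) := by
        rw [hinv, ucast_comb]; exact ucast_congr u (by ring)
      have hu : (↑(u ^ (-(k : ℤ) - 1)) : R) * (↑u : R) = (↑(u ^ (-(k : ℤ))) : R) := by
        have t := ucast_comb u (-(k : ℤ) - 1) 1
        simp only [zpow_one] at t
        exact t.trans (ucast_congr u (by ring))
      have key : (↑(u ^ (-(k : ℤ) - 1)) : R) * ((↑u : R) * M)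
          = (↑(u ^ (-(k : ℤ) - 1)) : R) * (M * (↑u : R) + 1) := by rw [hP]
      rw [← mul_assoc, hu, ih, mul_add, mul_one, ← mul_assoc] at key
      have key2 := congrArg (· * (↑(u⁻¹) : R)) key
      simp only [add_mul, smul_mul_assoc, mul_assoc, hui, mul_one] at key2
      rw [h3, h4] at key2
      -- key2 : M * u^(-k-1) + (-k) • u^(-k-1-1) = u^(-k-1) * M + u^(-k-1-1)
      rw [sub_smul, one_smul, ← add_sub_assoc]
      exact (eq_sub_of_add_eq key2.symm)

/-- In an associative unital ring `R`, if `P := ↑u` for a unit `u`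
and `M` satisfies `P*M - M*P = 1`, then for all `l l' : ℤ`,
`[M*P^l, M*P^{l'}] = (l - l') • (M * P^{l+l'-1})`.  This encodes the structure
constants `c_{1l,1l'}^{qr} = (l-l')·δ_{q,1}δ_{r,l+l'-1}`. -/
theorem commutator_M_zpow_M_zpow {R : Type*} [Ring R] (u : Rˣ) (M : R)
    (h : (↑u : R) * M - M * (↑u : R) = 1) :
    ∀ l l' : ℤ,
      (M * (↑(u ^ l) : R)) * (M * (↑(u ^ l') : R))
        - (M * (↑(u ^ l') : R)) * (M * (↑(u ^ l) : R))
        = (l - l') • (M * (↑(u ^ (l + l' - 1)) : R)) := by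
  intro l l'
  have hl := zpow_mul_M u M h l
  have hl' := zpow_mul_M u M h l'
  have step : (M * (↑(u ^ l) : R)) * (M * (↑(u ^ l') : R))
        - (M * (↑(u ^ l') : R)) * (M * (↑(u ^ l) : R))
      = M * ((↑(u ^ l) : R) * M) * (↑(u ^ l') : R)
        - M * ((↑(u ^ l') : R) * M) * (↑(u ^ l) : R) := by noncomm_ring
  rw [step, hl, hl']
  simp only [mul_add, add_mul, mul_smul_comm, smul_mul_assoc, mul_assoc, ucast_comb]
  rw [ucast_congr u (show l - 1 + l' = l + l' - 1 by ring),
    ucast_congr u (show l' - 1 + l = l + l' - 1 by ring),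
    ucast_congr u (show l' + l = l + l' by ring), sub_smul]
  abel
end

section
/- Let R be an associative unital ring, let u be a unit of R with underlying element P := ↑u, and let M ∈ R satisfy P*M − M*P = 1. Then for all m, m' ∈ ℕ and l, l' ∈ ℤ, the commutator (M^m*P^l)*(M^{m'}*P^{l'}) − (M^{m'}*P^{l'})*(M^m*P^l) lies in the ℤ-submodule of R spanned by the set { M^q * P^r : q ∈ ℕ, r ∈ ℤ, q ≤ m + m' − 1, |r − (l + l')| ≤ max(m, m') }. This is the paper's claim that the structure constants c_{ml,m'l'}^{qr} in [M^m P^l, M^{m'} P^{l'}] = Σ c_{ml,m'l'}^{qr} M^q P^r vanish whenever q ≥ m + m' or |r − (l + l')| > max(m, m'). -/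
section AuxWeyl
variable {R : Type*} [Ring R] (u : Rˣ) (M : R)

lemma cast_zpow_mul' (a b : ℤ) : (↑(u ^ a) : R) * ↑(u ^ b) = ↑(u ^ (a + b)) := by
  rw [← Units.val_mul, ← zpow_add]

lemma u_eq : (↑u : R) = ↑(u ^ (1 : ℤ)) := by rw [zpow_one]

lemma cast_comm_swap (a : ℤ) (x y : R) : x * ((a:R) * y) = (a:ℤ) • (x * y) := by
  rw [zsmul_eq_mul, ← mul_assoc, ← Int.cast_comm, mul_assoc]

lemma key_step (h : (↑u : R) * M - M * (↑u : R) = 1) (l : ℤ) :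
    (↑(u ^ l) : R) * M = M * ↑(u ^ l) + (l : R) * ↑(u ^ (l - 1)) := by
  have h2 : (↑u : R) * M = M * ↑u + 1 := sub_eq_iff_eq_add'.mp h
  induction l using Int.induction_on with
  | zero => simp
  | succ k ih =>
    have h1 : (↑(u ^ ((k : ℤ) + 1)) : R) = ↑(u ^ (k : ℤ)) * ↑u := by
      rw [u_eq u, cast_zpow_mul']
    have h3 : (↑(u ^ ((k:ℤ) - 1)) : R) * ↑u = ↑(u ^ (k:ℤ)) := by
      rw [u_eq u, cast_zpow_mul', show (k:ℤ) - 1 + 1 = k from by ring]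
    have h5 : (↑(u ^ ((k : ℤ) + 1)) : R) * M = ↑(u ^ (k:ℤ)) * ((↑u:R) * M) := by
      rw [h1, mul_assoc]
    rw [show ((k:ℤ) + 1) - 1 = (k:ℤ) from by ring, h5, h2, mul_add, mul_one,
      ← mul_assoc, ih, add_mul, mul_assoc M _ _, ← h1, mul_assoc, h3]
    push_cast
    noncomm_ring
  | pred k ih =>
    have e2 : (↑(u ^ (-1:ℤ)) : R) * ↑u = 1 := by
      rw [u_eq u, cast_zpow_mul']; norm_num
    have e3 : (↑u : R) * ↑(u ^ (-1:ℤ)) = 1 := by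
      rw [u_eq u, cast_zpow_mul']; norm_num
    have e4 : ∀ a : ℤ, (↑(u ^ (-1:ℤ)) : R) * ↑(u ^ a) = ↑(u ^ (a - 1)) := by
      intro a; rw [cast_zpow_mul', show -1 + a = a - 1 from by ring]
    have hinv : (↑(u ^ (-1 : ℤ)) : R) * M = M * ↑(u ^ (-1:ℤ)) - ↑(u ^ (-2:ℤ)) := by
      have e1 : (↑(u ^ (-1:ℤ)) : R) * ((↑u : R) * M) * ↑(u ^ (-1:ℤ))
          = (↑(u ^ (-1:ℤ)) : R) * (M * ↑u + 1) * ↑(u ^ (-1:ℤ)) := by rw [h2]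
      rw [← mul_assoc, e2, one_mul, mul_add, mul_one, add_mul, ← mul_assoc,
        mul_assoc _ M _, mul_assoc _ (M * ↑u) _, mul_assoc M _ _, e3, mul_one] at e1
      have e5 : (↑(u ^ (-1:ℤ)) : R) * ↑(u ^ (-1:ℤ)) = ↑(u ^ (-2:ℤ)) := by
        rw [cast_zpow_mul']; norm_num
      rw [e5] at e1
      rw [e1]; abel
    have g1 : (↑(u ^ (-(k:ℤ) - 1)) : R) * M = ↑(u ^ (-1:ℤ)) * (↑(u ^ (-(k:ℤ))) * M) := by
      rw [← mul_assoc, e4]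
    rw [g1, ih, mul_add, ← mul_assoc, hinv, sub_mul, mul_assoc M _ _, e4,
      ← mul_assoc,
      show (↑(u ^ (-1:ℤ)):R) * ((-(k:ℤ) : ℤ):R) = ((-(k:ℤ):ℤ):R) * ↑(u ^ (-1:ℤ)) from
        (Int.cast_comm _ _).symm,
      mul_assoc, e4, cast_zpow_mul', show (-2 + -(k:ℤ)) = -(k:ℤ) - 1 - 1 from by ring]
    push_cast
    noncomm_ring

lemma commP (h : (↑u : R) * M - M * (↑u : R) = 1) (m : ℕ) (l : ℤ) :
    (↑(u ^ l) : R) * M ^ m - M ^ m * ↑(u ^ l) ∈ Submodule.span ℤ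
      {x : R | ∃ q : ℕ, ∃ r : ℤ, q < m ∧ l - m ≤ r ∧ r < l ∧ x = M ^ q * ↑(u ^ r)} := by
  induction m with
  | zero => simp
  | succ m ih =>
    have hmul : ∀ x ∈ Submodule.span ℤ
        {x : R | ∃ q : ℕ, ∃ r : ℤ, q < m ∧ l - m ≤ r ∧ r < l ∧ x = M ^ q * ↑(u ^ r)},
        x * M ∈ Submodule.span ℤ
        {x : R | ∃ q : ℕ, ∃ r : ℤ, q < m + 1 ∧ l - (m+1 : ℕ) ≤ r ∧ r < l ∧ x = M ^ q * ↑(u ^ r)} := by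
      intro x hx
      induction hx using Submodule.span_induction with
      | mem x hxs =>
        obtain ⟨q, r, hq, hr1, hr2, rfl⟩ := hxs
        rw [mul_assoc, key_step u M h r, mul_add, ← mul_assoc, ← pow_succ,
          cast_comm_swap]
        refine add_mem (Submodule.subset_span ⟨q+1, r, by omega, ?_, hr2, rfl⟩)
          (Submodule.smul_mem _ _ (Submodule.subset_span ⟨q, r-1, by omega, ?_, by omega, rfl⟩))
        · push_cast at hr1 ⊢; omega
        · push_cast at hr1 ⊢; omega
      | zero => simpa using Submodule.zero_mem _
      | add x y _ _ hx hy => rw [add_mul]; exact add_mem hx hy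
      | smul a x _ hx => rw [smul_mul_assoc]; exact Submodule.smul_mem _ _ hx
    have expand : (↑(u ^ l) : R) * M ^ (m+1) - M ^ (m+1) * ↑(u ^ l)
        = (l:ℤ) • (M ^ m * ↑(u ^ (l-1)))
          + ((↑(u ^ l) : R) * M ^ m - M ^ m * ↑(u ^ l)) * M := by
      calc (↑(u ^ l) : R) * M ^ (m+1) - M ^ (m+1) * ↑(u ^ l)
          = ((↑(u ^ l) : R) * M ^ m - M ^ m * ↑(u ^ l)) * M
            + M ^ m * ((↑(u ^ l) : R) * M) - M ^ m * (M * ↑(u ^ l)) := by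
            rw [pow_succ]; noncomm_ring
        _ = ((↑(u ^ l) : R) * M ^ m - M ^ m * ↑(u ^ l)) * M
            + M ^ m * (M * ↑(u ^ l) + (l:R) * ↑(u ^ (l-1))) - M ^ m * (M * ↑(u ^ l)) := by
            rw [key_step u M h l]
        _ = M ^ m * ((l:R) * ↑(u ^ (l-1)))
            + ((↑(u ^ l) : R) * M ^ m - M ^ m * ↑(u ^ l)) * M := by noncomm_ring
        _ = (l:ℤ) • (M ^ m * ↑(u ^ (l-1)))
            + ((↑(u ^ l) : R) * M ^ m - M ^ m * ↑(u ^ l)) * M := by rw [cast_comm_swap]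
    rw [expand]
    exact add_mem (Submodule.smul_mem _ _ (Submodule.subset_span
      ⟨m, l-1, by omega, by push_cast; omega, by omega, rfl⟩)) (hmul _ ih)

end AuxWeyl

section AuxWeyl2
variable {R : Type*} [Ring R] (u : Rˣ) (M : R)

lemma aux_mem (a b : ℕ) (c d : ℤ) :
    ∀ x ∈ Submodule.span ℤ
      {x : R | ∃ q : ℕ, ∃ r : ℤ, q < b ∧ c - b ≤ r ∧ r < c ∧ x = M ^ q * ↑(u ^ r)},
    M ^ a * x * ↑(u ^ d) ∈ Submodule.span ℤ
      {x : R | ∃ q : ℕ, ∃ r : ℤ, q < a + b ∧ |r - (c + d)| ≤ (b:ℤ) ∧ x = M ^ q * ↑(u ^ r)} := by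
  intro x hx
  induction hx using Submodule.span_induction with
  | mem x hxs =>
    obtain ⟨q, r, hq, hr1, hr2, rfl⟩ := hxs
    refine Submodule.subset_span ⟨a+q, r+d, by omega, ?_, ?_⟩
    · rw [abs_le]; push_cast at hr1 ⊢; omega
    · rw [← mul_assoc, ← pow_add, mul_assoc, cast_zpow_mul']
  | zero => simp
  | add x y _ _ hx hy =>
    rw [mul_add, add_mul]; exact add_mem hx hy
  | smul t x _ hx =>
    rw [mul_smul_comm, smul_mul_assoc]; exact Submodule.smul_mem _ _ hx

end AuxWeyl2

/-- In an associative unital ring `R`, if `P := ↑u` for a unit `u`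
and `M` satisfies `P*M - M*P = 1`, then for all `m m' : ℕ` and `l l' : ℤ`, the
commutator `[M^m*P^l, M^{m'}*P^{l'}]` lies in the ℤ-submodule spanned by the
monomials `M^q * P^r` with `q ≤ m + m' - 1` (i.e. `q < m + m'`) and
`|r - (l + l')| ≤ max m m'`. -/
theorem commutator_mem_span {R : Type*} [Ring R] (u : Rˣ) (M : R)
    (h : (↑u : R) * M - M * (↑u : R) = 1) (m m' : ℕ) (l l' : ℤ) :
    (M ^ m * (↑(u ^ l) : R)) * (M ^ m' * (↑(u ^ l') : R))
      - (M ^ m' * (↑(u ^ l') : R)) * (M ^ m * (↑(u ^ l) : R))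
      ∈ Submodule.span ℤ
          {x : R | ∃ q : ℕ, ∃ r : ℤ, q < m + m' ∧ |r - (l + l')| ≤ (max m m' : ℤ) ∧
            x = M ^ q * (↑(u ^ r) : R)} := by
  set D1 : R := (↑(u ^ l) : R) * M ^ m' - M ^ m' * ↑(u ^ l) with hD1
  set D2 : R := (↑(u ^ l') : R) * M ^ m - M ^ m * ↑(u ^ l') with hD2
  have d1 : (↑(u ^ l) : R) * M ^ m' = M ^ m' * ↑(u ^ l) + D1 := by rw [hD1]; abel
  have d2 : (↑(u ^ l') : R) * M ^ m = M ^ m * ↑(u ^ l') + D2 := by rw [hD2]; abel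
  have cancel : M ^ m * (M ^ m' * ((↑(u ^ l) : R) * ↑(u ^ l')))
      = M ^ m' * (M ^ m * ((↑(u ^ l') : R) * ↑(u ^ l))) := by
    rw [cast_zpow_mul', cast_zpow_mul', ← mul_assoc, ← mul_assoc, ← pow_add, ← pow_add,
      add_comm m m', add_comm l' l]
  have expand : (M ^ m * (↑(u ^ l) : R)) * (M ^ m' * (↑(u ^ l') : R))
      - (M ^ m' * (↑(u ^ l') : R)) * (M ^ m * (↑(u ^ l) : R))
      = M ^ m * D1 * ↑(u ^ l') - M ^ m' * D2 * ↑(u ^ l) := by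
    calc (M ^ m * (↑(u ^ l) : R)) * (M ^ m' * (↑(u ^ l') : R))
        - (M ^ m' * (↑(u ^ l') : R)) * (M ^ m * (↑(u ^ l) : R))
        = M ^ m * ((↑(u ^ l) : R) * M ^ m') * ↑(u ^ l')
          - M ^ m' * ((↑(u ^ l') : R) * M ^ m) * ↑(u ^ l) := by
          simp only [mul_assoc]
      _ = M ^ m * (M ^ m' * ↑(u ^ l) + D1) * ↑(u ^ l')
          - M ^ m' * (M ^ m * ↑(u ^ l') + D2) * ↑(u ^ l) := by rw [d1, d2]
      _ = (M ^ m * (M ^ m' * ((↑(u ^ l) : R) * ↑(u ^ l')))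
            - M ^ m' * (M ^ m * ((↑(u ^ l') : R) * ↑(u ^ l))))
          + (M ^ m * D1 * ↑(u ^ l') - M ^ m' * D2 * ↑(u ^ l)) := by noncomm_ring
      _ = M ^ m * D1 * ↑(u ^ l') - M ^ m' * D2 * ↑(u ^ l) := by
          rw [cancel]; abel
  rw [expand]
  have mem1 : M ^ m * D1 * ↑(u ^ l') ∈ Submodule.span ℤ
      {x : R | ∃ q : ℕ, ∃ r : ℤ, q < m + m' ∧ |r - (l + l')| ≤ ((m':ℕ):ℤ) ∧
        x = M ^ q * (↑(u ^ r) : R)} :=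
    aux_mem u M m m' l l' D1 (commP u M h m' l)
  have mem2 : M ^ m' * D2 * ↑(u ^ l) ∈ Submodule.span ℤ
      {x : R | ∃ q : ℕ, ∃ r : ℤ, q < m' + m ∧ |r - (l' + l)| ≤ ((m:ℕ):ℤ) ∧
        x = M ^ q * (↑(u ^ r) : R)} :=
    aux_mem u M m' m l' l D2 (commP u M h m l')
  refine sub_mem (Submodule.span_mono ?_ mem1) (Submodule.span_mono ?_ mem2)
  · rintro x ⟨q, r, hq, hr, rfl⟩
    exact ⟨q, r, hq, le_trans hr (by push_cast; omega), rfl⟩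
  · rintro x ⟨q, r, hq, hr, rfl⟩
    refine ⟨q, r, by omega, ?_, rfl⟩
    rw [add_comm l' l] at hr
    exact le_trans hr (by push_cast; omega)
end

section
/- (Proposition 6.1, case ν = 1: Virasoro relations for the Burgers-KdV hierarchy.) For an integer j ≥ −1 define the ℂ-linear operator V_{1,j} : R → R by V_{1,j} f = (1/4) · Σ_{a ∈ ℤ, a odd} :p_a p_{2j−a}:(f) + δ_{j,0} · (1/16) · f, where the sum over a ∈ ℤ is the finite sum (finsum) of the finitely many nonzero terms. Then for all integers j, k ≥ −1 with j + k ≥ −1 and every f ∈ R: V_{1,j}(V_{1,k} f) − V_{1,k}(V_{1,j} f) = (j − k) · V_{1,j+k} f. -/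
open MvPolynomial

/-- The operator `p_a` on `R = MvPolynomial ℕ ℂ`: for `a > 0` the partial
derivative with respect to `X_{a-1}` (i.e. the time variable `t_a`), for
`a < 0` multiplication by `(-a)·X_{-a-1}`, and `p_0 = 0`. -/
noncomputable def pOp (a : ℤ) : MvPolynomial ℕ ℂ → MvPolynomial ℕ ℂ :=
  if 0 < a then fun f => pderiv (a - 1).toNat f
  else if a < 0 then fun f => (((-a : ℤ) : ℂ)) • (X ((-a - 1).toNat) * f)
  else fun _ => 0

/-- The normal-ordered product `:p_a p_b:`. -/
noncomputable def nord (a b : ℤ) : MvPolynomial ℕ ℂ → MvPolynomial ℕ ℂ :=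
  if 0 < a ∧ b < 0 then pOp b ∘ pOp a else pOp a ∘ pOp b

/-- The Virasoro operator `V_{1,j}` of the Burgers-KdV hierarchy:
`V_{1,j} f = (1/4)·Σ_{a odd} :p_a p_{2j-a}:(f) + δ_{j,0}·(1/16)·f`. -/
noncomputable def V1 (j : ℤ) (f : MvPolynomial ℕ ℂ) : MvPolynomial ℕ ℂ :=
  (1 / 4 : ℂ) • (∑ᶠ a ∈ {a : ℤ | Odd a}, nord a (2 * j - a) f)
    + (if j = 0 then (1 / 16 : ℂ) • f else 0)

namespace VirAux

abbrev R := MvPolynomial ℕ ℂ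

lemma pOp_of_pos {a : ℤ} (h : 0 < a) : pOp a = fun f => pderiv (a - 1).toNat f := by
  unfold pOp; rw [if_pos h]

lemma pOp_of_neg {a : ℤ} (h : a < 0) :
    pOp a = fun f => (((-a : ℤ) : ℂ)) • (X ((-a - 1).toNat) * f) := by
  unfold pOp; rw [if_neg (by omega), if_pos h]

lemma pOp_of_zero : pOp 0 = fun (_ : R) => 0 := by
  unfold pOp; norm_num

lemma pOp_add (a : ℤ) (f g : R) : pOp a (f + g) = pOp a f + pOp a g := by
  rcases lt_trichotomy 0 a with h | h | h
  · rw [pOp_of_pos h]; simp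
  · rw [← h, pOp_of_zero]; simp
  · rw [pOp_of_neg h]; simp [mul_add, smul_add]

lemma pOp_smul (a : ℤ) (c : ℂ) (f : R) : pOp a (c • f) = c • pOp a f := by
  rcases lt_trichotomy 0 a with h | h | h
  · rw [pOp_of_pos h]; simp
  · rw [← h, pOp_of_zero]; simp
  · rw [pOp_of_neg h]; simp [mul_smul_comm]; rw [smul_comm]

lemma pOp_zero (a : ℤ) : pOp a (0 : R) = 0 := by
  have := pOp_smul a 0 0; simpa using this

lemma pOp_sub (a : ℤ) (f g : R) : pOp a (f - g) = pOp a f - pOp a g := by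
  have h1 := pOp_add a (f - g) g
  simp at h1
  rw [h1]; abel

noncomputable def pOpL (a : ℤ) : R →ₗ[ℂ] R where
  toFun := pOp a
  map_add' := pOp_add a
  map_smul' := pOp_smul a

@[simp] lemma pOpL_apply (a : ℤ) (f : R) : pOpL a f = pOp a f := rfl

lemma nord_add (a b : ℤ) (f g : R) : nord a b (f + g) = nord a b f + nord a b g := by
  unfold nord; split_ifs <;> simp [Function.comp, pOp_add]

lemma nord_smul (a b : ℤ) (c : ℂ) (f : R) : nord a b (c • f) = c • nord a b f := by
  unfold nord; split_ifs <;> simp [Function.comp, pOp_smul]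

noncomputable def nordL (a b : ℤ) : R →ₗ[ℂ] R where
  toFun := nord a b
  map_add' := nord_add a b
  map_smul' := nord_smul a b

@[simp] lemma nordL_apply (a b : ℤ) (f : R) : nordL a b f = nord a b f := rfl

lemma pderiv_comm' (i j : ℕ) (f : R) : pderiv i (pderiv j f) = pderiv j (pderiv i f) := by
  induction f using MvPolynomial.induction_on' with
  | monomial s a =>
    by_cases h : i = j
    · subst h; rfl
    · simp only [pderiv_monomial]
      have e1 : ((s - Finsupp.single j 1 : ℕ →₀ ℕ)) i = s i := by
        rw [Finsupp.tsub_apply, Finsupp.single_apply, if_neg (fun hh => h hh.symm), tsub_zero]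
      have e2 : ((s - Finsupp.single i 1 : ℕ →₀ ℕ)) j = s j := by
        rw [Finsupp.tsub_apply, Finsupp.single_apply, if_neg h, tsub_zero]
      rw [e1, e2, tsub_right_comm, mul_right_comm]
  | add p q hp hq => simp [hp, hq]

lemma pOp_pOp (a b : ℤ) (f : R) :
    pOp a (pOp b f) = pOp b (pOp a f) + (if a + b = 0 then (a : ℂ) else 0) • f := by
  rcases lt_trichotomy 0 a with ha | ha | ha
  · rcases lt_trichotomy 0 b with hb | hb | hb
    · rw [pOp_of_pos ha, pOp_of_pos hb, if_neg (by omega), zero_smul, add_zero]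
      exact pderiv_comm' _ _ f
    · rw [← hb, pOp_of_zero, pOp_of_pos ha, if_neg (by omega), zero_smul, add_zero]
      simp
    · by_cases hab : a + b = 0
      · obtain rfl : b = -a := by omega
        rw [pOp_of_pos ha, pOp_of_neg hb, if_pos hab]
        dsimp only
        simp only [neg_neg]
        rw [Derivation.map_smul, pderiv_mul, pderiv_X_self, one_mul, smul_add]
        push_cast
        module
      · rw [pOp_of_pos ha, pOp_of_neg hb, if_neg hab, zero_smul, add_zero]
        dsimp only
        rw [Derivation.map_smul, pderiv_mul,
          pderiv_X_of_ne (show (-b - 1).toNat ≠ (a - 1).toNat by omega), zero_mul, zero_add]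
  · rw [← ha, pOp_of_zero]
    simp [pOp_zero]
  · rcases lt_trichotomy 0 b with hb | hb | hb
    · by_cases hab : a + b = 0
      · obtain rfl : b = -a := by omega
        rw [pOp_of_neg ha, pOp_of_pos hb, if_pos hab]
        dsimp only
        rw [Derivation.map_smul, pderiv_mul, pderiv_X_self, one_mul, smul_add]
        push_cast
        module
      · rw [pOp_of_neg ha, pOp_of_pos hb, if_neg hab, zero_smul, add_zero]
        dsimp only
        rw [Derivation.map_smul, pderiv_mul,
          pderiv_X_of_ne (show (-a - 1).toNat ≠ (b - 1).toNat by omega), zero_mul, zero_add]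
    · rw [← hb, pOp_of_zero, pOp_of_neg ha, if_neg (by omega), zero_smul, add_zero]
      simp
    · rw [pOp_of_neg ha, pOp_of_neg hb, if_neg (by omega), zero_smul, add_zero]
      dsimp only
      simp only [mul_smul_comm, smul_smul]
      rw [mul_comm]
      congr 1
      ring

lemma nord_eq (a b : ℤ) (f : R) :
    nord a b f = pOp a (pOp b f) - (if 0 < a ∧ a + b = 0 then (a : ℂ) else 0) • f := by
  unfold nord
  by_cases h : 0 < a ∧ b < 0
  · rw [if_pos h]
    simp only [Function.comp_apply]
    rw [pOp_pOp a b f]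
    by_cases hab : a + b = 0
    · rw [if_pos hab, if_pos ⟨h.1, hab⟩]; abel
    · rw [if_neg hab, if_neg (by tauto)]; simp
  · rw [if_neg h]
    simp only [Function.comp_apply]
    have : ¬(0 < a ∧ a + b = 0) := by rintro ⟨h1, h2⟩; exact h ⟨h1, by omega⟩
    rw [if_neg this]; simp

lemma nord_symm (a b : ℤ) (f : R) : nord a b f = nord b a f := by
  rw [nord_eq, nord_eq, pOp_pOp a b f]
  have key : (if a + b = 0 then (a : ℂ) else 0) - (if 0 < a ∧ a + b = 0 then (a : ℂ) else 0)
      = -(if 0 < b ∧ b + a = 0 then (b : ℂ) else 0) := by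
    by_cases h1 : a + b = 0
    · by_cases h2 : 0 < a
      · rw [if_pos h1, if_pos ⟨h2, h1⟩, if_neg (by rintro ⟨hh, -⟩; omega)]; ring
      · rw [if_pos h1, if_neg (by tauto)]
        by_cases h3 : 0 < b
        · rw [if_pos ⟨h3, by omega⟩]
          obtain rfl : a = -b := by omega
          push_cast; ring
        · rw [if_neg (by tauto)]
          obtain rfl : a = (0 : ℤ) := by omega
          simp
    · rw [if_neg h1, if_neg (by tauto), if_neg (by rintro ⟨-, hh⟩; omega)]; ring
  rw [add_sub_assoc, ← sub_smul, key, neg_smul, ← sub_eq_add_neg]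

/-- `f` only involves variables of index `< N`. -/
def Bnd (N : ℕ) (f : R) : Prop := ∀ m : ℕ, N ≤ m → pderiv m f = 0

lemma bnd_exists (f : R) : ∃ N, Bnd N f := by
  refine ⟨(f.vars.sup id) + 1, fun m hm => pderiv_eq_zero_of_notMem_vars ?_⟩
  intro hmem
  have := Finset.le_sup (f := id) hmem
  simp only [id] at this
  omega

lemma Bnd.mono {N N' : ℕ} {f : R} (h : Bnd N f) (hN : N ≤ N') : Bnd N' f :=
  fun m hm => h m (le_trans hN hm)

lemma Bnd.add {N : ℕ} {f g : R} (hf : Bnd N f) (hg : Bnd N g) : Bnd N (f + g) := by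
  intro m hm; rw [map_add, hf m hm, hg m hm, add_zero]

lemma Bnd.smul {N : ℕ} {f : R} (hf : Bnd N f) (c : ℂ) : Bnd N (c • f) := by
  intro m hm; rw [Derivation.map_smul, hf m hm, smul_zero]

lemma Bnd.zero {N : ℕ} : Bnd N (0 : R) := fun m _ => map_zero _

lemma Bnd.pOp {N : ℕ} {f : R} (h : Bnd N f) (b : ℤ) : Bnd (N + b.natAbs) (pOp b f) := by
  intro m hm
  rcases lt_trichotomy 0 b with hb | hb | hb
  · rw [pOp_of_pos hb]
    dsimp only
    rw [pderiv_comm', h m (by omega), map_zero]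
  · rw [← hb, pOp_of_zero]
    dsimp only
    rw [map_zero]
  · rw [pOp_of_neg hb]
    dsimp only
    rw [Derivation.map_smul, pderiv_mul,
      pderiv_X_of_ne (show (-b - 1).toNat ≠ m by omega), zero_mul, zero_add,
      h m (by omega), mul_zero, smul_zero]

lemma Bnd.nordB {N : ℕ} {f : R} (h : Bnd N f) (a b : ℤ) :
    Bnd (N + a.natAbs + b.natAbs) (nord a b f) := by
  unfold nord
  split_ifs
  · simp only [Function.comp_apply]
    exact ((h.pOp a).pOp b).mono (by omega)
  · simp only [Function.comp_apply]
    exact ((h.pOp b).pOp a).mono (by omega)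

lemma nord_vanish_right {N : ℕ} {f : R} (h : Bnd N f) {a b : ℤ} (ha : (N : ℤ) < a) :
    nord a b f = 0 := by
  have ha0 : 0 < a := by omega
  unfold nord
  by_cases hb : b < 0
  · rw [if_pos ⟨ha0, hb⟩]
    simp only [Function.comp_apply]
    rw [pOp_of_pos ha0]
    dsimp only
    rw [h (a - 1).toNat (by omega), pOp_zero]
  · rw [if_neg (by tauto)]
    simp only [Function.comp_apply]
    rcases lt_trichotomy 0 b with hb' | hb' | hb'
    · rw [pOp_of_pos ha0, pOp_of_pos hb']
      dsimp only
      rw [pderiv_comm', h (a - 1).toNat (by omega), map_zero]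
    · rw [← hb', pOp_of_zero]
      dsimp only
      rw [pOp_zero]
    · omega

lemma nord_vanish {N : ℕ} {f : R} (h : Bnd N f) {a b : ℤ}
    (hab : (N : ℤ) < a ∨ (N : ℤ) < b) : nord a b f = 0 := by
  rcases hab with hab | hab
  · exact nord_vanish_right h hab
  · rw [nord_symm]; exact nord_vanish_right h hab

open Finset in
/-- The truncated Virasoro sum, as a linear map. -/
noncomputable def TTL (n M : ℤ) : R →ₗ[ℂ] R :=
  ∑ a ∈ Finset.Icc (-M) M, if Odd a then nordL a (n - a) else 0

lemma TTL_apply (n M : ℤ) (f : R) :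
    TTL n M f = ∑ a ∈ Finset.Icc (-M) M, (if Odd a then nord a (n - a) f else 0) := by
  rw [TTL, LinearMap.coe_sum, Finset.sum_apply]
  refine Finset.sum_congr rfl fun a _ => ?_
  by_cases h : Odd a
  · rw [if_pos h, if_pos h, nordL_apply]
  · rw [if_neg h, if_neg h, LinearMap.zero_apply]

lemma T_eq_TTL {N : ℕ} {f : R} (h : Bnd N f) {n M : ℤ}
    (h1 : (N : ℤ) ≤ M) (h2 : (N : ℤ) ≤ M + n) :
    (∑ᶠ a ∈ {a : ℤ | Odd a}, nord a (n - a) f) = TTL n M f := by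
  rw [TTL_apply, finsum_mem_def,
    finsum_eq_sum_of_support_subset _ (s := Finset.Icc (-M) M) ?_]
  · refine Finset.sum_congr rfl fun a _ => ?_
    by_cases hOdd : Odd a
    · rw [Set.indicator_of_mem (show a ∈ {a : ℤ | Odd a} from hOdd), if_pos hOdd]
    · rw [Set.indicator_of_notMem (show a ∉ {a : ℤ | Odd a} from hOdd), if_neg hOdd]
  · intro a ha
    simp only [Function.mem_support] at ha
    by_contra hmem
    simp only [Finset.coe_Icc, Set.mem_Icc, not_and_or, not_le] at hmem
    apply ha
    by_cases hOdd : a ∈ {a : ℤ | Odd a}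
    · rw [Set.indicator_of_mem hOdd]
      exact nord_vanish h (by omega)
    · exact Set.indicator_of_notMem hOdd _


lemma Bnd.TTL {N : ℕ} {f : R} (h : Bnd N f) (n M : ℤ) :
    Bnd (N + 2 * M.toNat + n.natAbs) (TTL n M f) := by
  intro m hm
  rw [TTL_apply, map_sum]
  refine Finset.sum_eq_zero fun a ha => ?_
  simp only [Finset.mem_Icc] at ha
  by_cases hOdd : Odd a
  · rw [if_pos hOdd]
    exact (h.nordB a (n - a)) m (by omega)
  · rw [if_neg hOdd, map_zero]

lemma nord_pOp_comm (a b c : ℤ) (f : R) :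
    nord a b (pOp c f) = pOp c (nord a b f)
      + (if a + c = 0 then (a : ℂ) else 0) • pOp b f
      + (if b + c = 0 then (b : ℂ) else 0) • pOp a f := by
  rw [nord_eq, nord_eq, pOp_sub, pOp_smul, pOp_pOp b c f, pOp_add, pOp_smul,
    pOp_pOp a c (pOp b f)]
  abel

lemma TTL_pOp_comm {n M c : ℤ} (hc : Odd c) (hn : Even n)
    (h1 : -c ∈ Finset.Icc (-M) M) (h2 : n + c ∈ Finset.Icc (-M) M) (f : R) :
    TTL n M (pOp c f) = pOp c (TTL n M f) + ((-(2 * c) : ℤ) : ℂ) • pOp (n + c) f := by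
  have expand : ∀ a ∈ Finset.Icc (-M) M,
      (if Odd a then nord a (n - a) (pOp c f) else 0)
      = (if Odd a then pOp c (nord a (n - a) f) else 0)
        + ((if a = -c then ((-c : ℤ) : ℂ) • pOp (n + c) f else 0)
        + (if a = n + c then ((-c : ℤ) : ℂ) • pOp (n + c) f else 0)) := by
    intro a _
    by_cases hOdd : Odd a
    · rw [if_pos hOdd, if_pos hOdd, nord_pOp_comm, add_assoc]
      congr 1
      congr 1
      · by_cases h : a = -c
        · subst h
          rw [if_pos (by ring), sub_neg_eq_add, if_pos rfl]
        · rw [if_neg (by omega), if_neg h, zero_smul]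
      · by_cases h : a = n + c
        · subst h
          rw [if_pos (by ring)]
          have e : n - (n + c) = -c := by ring
          rw [e, if_pos rfl]
        · rw [if_neg (by omega), if_neg h, zero_smul]
    · rw [if_neg hOdd, if_neg hOdd,
        if_neg (fun h => hOdd (by rw [h]; exact hc.neg)), if_neg (fun h => hOdd (by rw [h]; exact hn.add_odd hc))]
      simp
  rw [TTL_apply, Finset.sum_congr rfl expand, Finset.sum_add_distrib, Finset.sum_add_distrib,
    Finset.sum_ite_eq' _ (-c) (fun _ => ((-c : ℤ) : ℂ) • pOp (n + c) f), if_pos h1,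
    Finset.sum_ite_eq' _ (n + c) (fun _ => ((-c : ℤ) : ℂ) • pOp (n + c) f), if_pos h2]
  have e2 : pOp c (TTL n M f)
      = ∑ a ∈ Finset.Icc (-M) M, (if Odd a then pOp c (nord a (n - a) f) else 0) := by
    rw [TTL_apply, show pOp c = ⇑(pOpL c) from rfl, map_sum]
    refine Finset.sum_congr rfl fun a _ => ?_
    by_cases hOdd : Odd a
    · rw [if_pos hOdd, if_pos hOdd, pOpL_apply]
    · rw [if_neg hOdd, if_neg hOdd, map_zero]
  rw [e2, ← add_smul]
  congr 2
  push_cast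
  ring

lemma TTL_nord_comm {n M b b' : ℤ} (hb : Odd b) (hb' : Odd b') (hn : Even n)
    (m1 : -b ∈ Finset.Icc (-M) M) (m2 : n + b ∈ Finset.Icc (-M) M)
    (m3 : -b' ∈ Finset.Icc (-M) M) (m4 : n + b' ∈ Finset.Icc (-M) M) (f : R) :
    TTL n M (nord b b' f) = nord b b' (TTL n M f)
      + ((-(2 * b') : ℤ) : ℂ) • pOp b (pOp (n + b') f)
      + ((-(2 * b) : ℤ) : ℂ) • pOp (n + b) (pOp b' f) := by
  have e0 : TTL n M (nord b b' f)
      = TTL n M (pOp b (pOp b' f))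
        - (if 0 < b ∧ b + b' = 0 then (b : ℂ) else 0) • TTL n M f := by
    rw [nord_eq, map_sub, map_smul]
  have e1 : TTL n M (pOp b (pOp b' f))
      = pOp b (TTL n M (pOp b' f)) + ((-(2 * b) : ℤ) : ℂ) • pOp (n + b) (pOp b' f) :=
    TTL_pOp_comm hb hn m1 m2 (pOp b' f)
  have e2 : TTL n M (pOp b' f)
      = pOp b' (TTL n M f) + ((-(2 * b') : ℤ) : ℂ) • pOp (n + b') f :=
    TTL_pOp_comm hb' hn m3 m4 f
  rw [e0, e1, e2, pOp_add, pOp_smul, nord_eq]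
  abel

noncomputable def Tn (n : ℤ) (f : R) : R := ∑ᶠ a ∈ {a : ℤ | Odd a}, nord a (n - a) f

lemma Tn_eq_TTL {N : ℕ} {f : R} (h : Bnd N f) {n M : ℤ}
    (h1 : (N : ℤ) ≤ M) (h2 : (N : ℤ) ≤ M + n) : Tn n f = TTL n M f :=
  T_eq_TTL h h1 h2

lemma T_comm (j k m n : ℤ) (hm : m = 2 * j) (hn : n = 2 * k)
    (hspec : j + k = 0 → (j = 1 ∧ k = -1) ∨ (j = 0 ∧ k = 0)) (f : R) :
    Tn m (Tn n f) - Tn n (Tn m f)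
      = ((4 * (j - k) : ℤ) : ℂ) • Tn (m + n) f
        + (if j + k = 0 then ((j - k : ℤ) : ℂ) else 0) • f := by
  obtain ⟨N, hN⟩ := bnd_exists f
  set Q : ℤ := 3 * (N : ℤ) + 6 * (j.natAbs : ℤ) + 6 * (k.natAbs : ℤ) + 8 with hQ
  set Q' : ℤ := 3 * Q with hQ'
  have hEm : Even m := ⟨j, by omega⟩
  have hEn : Even n := ⟨k, by omega⟩
  -- representations of the inner sums
  have hTnf : Tn n f = TTL n Q f := Tn_eq_TTL hN (by omega) (by omega)
  have hTmfQ : Tn m f = TTL m Q f := Tn_eq_TTL hN (by omega) (by omega)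
  have hTmfQ' : Tn m f = TTL m Q' f := Tn_eq_TTL hN (by omega) (by omega)
  -- bounds on the inner sums (via a minimal radius representation)
  have hBg : Bnd (N + 2 * ((N : ℤ) + 2 * (j.natAbs : ℤ)).toNat + m.natAbs) (Tn m f) := by
    rw [Tn_eq_TTL hN (M := (N : ℤ) + 2 * (j.natAbs : ℤ)) (by omega) (by omega)]
    exact hN.TTL m _
  have hBh : Bnd (N + 2 * ((N : ℤ) + 2 * (k.natAbs : ℤ)).toNat + n.natAbs) (Tn n f) := by
    rw [Tn_eq_TTL hN (M := (N : ℤ) + 2 * (k.natAbs : ℤ)) (by omega) (by omega)]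
    exact hN.TTL n _
  -- representations of the outer sums
  have hA : Tn m (Tn n f) = TTL m Q' (TTL n Q f) := by
    rw [← hTnf]; exact Tn_eq_TTL hBh (by omega) (by omega)
  have hB : Tn n (Tn m f) = TTL n Q (TTL m Q f) := by
    rw [← hTmfQ]; exact Tn_eq_TTL hBg (by omega) (by omega)
  -- the key expansion of the first double sum
  have expandA : TTL m Q' (TTL n Q f)
      = (∑ b ∈ Finset.Icc (-Q) Q, (if Odd b then nord b (n - b) (TTL m Q' f) else 0))
        + ∑ b ∈ Finset.Icc (-Q) Q, (if Odd b then
            ((-(2 * (n - b)) : ℤ) : ℂ) • pOp b (pOp (m + (n - b)) f)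
            + ((-(2 * b) : ℤ) : ℂ) • pOp (m + b) (pOp (n - b) f) else 0) := by
    rw [TTL_apply n Q f, map_sum, ← Finset.sum_add_distrib]
    refine Finset.sum_congr rfl fun b hb => ?_
    simp only [Finset.mem_Icc] at hb
    rw [apply_ite (fun x => TTL m Q' x), map_zero]
    by_cases hOdd : Odd b
    · rw [if_pos hOdd, if_pos hOdd, if_pos hOdd]
      have hOdd' : Odd (n - b) := hEn.sub_odd hOdd
      rw [TTL_nord_comm hOdd hOdd' hEm
        (by simp only [Finset.mem_Icc]; omega) (by simp only [Finset.mem_Icc]; omega)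
        (by simp only [Finset.mem_Icc]; omega) (by simp only [Finset.mem_Icc]; omega) f,
        add_assoc]
    · rw [if_neg hOdd, if_neg hOdd, if_neg hOdd, add_zero]
  have hQ'f : TTL m Q' f = TTL m Q f := by rw [← hTmfQ', hTmfQ]
  have collapse : (∑ b ∈ Finset.Icc (-Q) Q, (if Odd b then nord b (n - b) (TTL m Q f) else 0))
      = TTL n Q (TTL m Q f) := (TTL_apply n Q (TTL m Q f)).symm
  have main1 : Tn m (Tn n f) - Tn n (Tn m f)
      = ∑ b ∈ Finset.Icc (-Q) Q, (if Odd b then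
            ((-(2 * (n - b)) : ℤ) : ℂ) • pOp b (pOp (m + (n - b)) f)
            + ((-(2 * b) : ℤ) : ℂ) • pOp (m + b) (pOp (n - b) f) else 0) := by
    rw [hA, hB, expandA, hQ'f, collapse]
    abel
  -- split each summand into normal ordered parts and scalar corrections
  have split : ∀ b ∈ Finset.Icc (-Q) Q, (if Odd b then
            ((-(2 * (n - b)) : ℤ) : ℂ) • pOp b (pOp (m + (n - b)) f)
            + ((-(2 * b) : ℤ) : ℂ) • pOp (m + b) (pOp (n - b) f) else 0)
      = (if Odd b then ((-(2 * (n - b)) : ℤ) : ℂ) • nord b ((m + n) - b) f else 0)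
        + (if Odd b then ((-(2 * b) : ℤ) : ℂ) • nord (m + b) (n - b) f else 0)
        + (if Odd b then
            (((-(2 * (n - b)) : ℤ) : ℂ) * (if 0 < b ∧ m + n = 0 then (b : ℂ) else 0)
             + ((-(2 * b) : ℤ) : ℂ)
               * (if 0 < m + b ∧ m + n = 0 then ((m + b : ℤ) : ℂ) else 0)) else 0) • f := by
    intro b _
    by_cases hOdd : Odd b
    · rw [if_pos hOdd, if_pos hOdd, if_pos hOdd, if_pos hOdd]
      have r1 : pOp b (pOp (m + (n - b)) f)
          = nord b ((m + n) - b) f + (if 0 < b ∧ m + n = 0 then (b : ℂ) else 0) • f := by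
        have e1 : m + (n - b) = (m + n) - b := by ring
        rw [e1, nord_eq,
          if_congr (show (0 < b ∧ b + ((m + n) - b) = 0) ↔ (0 < b ∧ m + n = 0) by
            constructor <;> (rintro ⟨u, v⟩; exact ⟨u, by omega⟩)) rfl rfl]
        abel
      have r2 : pOp (m + b) (pOp (n - b) f)
          = nord (m + b) (n - b) f + (if 0 < m + b ∧ m + n = 0 then ((m + b : ℤ) : ℂ) else 0) • f := by
        rw [nord_eq,
          if_congr (show (0 < m + b ∧ (m + b) + (n - b) = 0) ↔ (0 < m + b ∧ m + n = 0) by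
            constructor <;> (rintro ⟨u, v⟩; exact ⟨u, by omega⟩)) rfl rfl]
        abel
      rw [r1, r2, smul_add, smul_add, add_smul, smul_smul, smul_smul]
      abel
    · rw [if_neg hOdd, if_neg hOdd, if_neg hOdd, if_neg hOdd, zero_smul]
      simp
  have main2 : Tn m (Tn n f) - Tn n (Tn m f)
      = (∑ b ∈ Finset.Icc (-Q) Q,
          (if Odd b then ((-(2 * (n - b)) : ℤ) : ℂ) • nord b ((m + n) - b) f else 0))
        + (∑ b ∈ Finset.Icc (-Q) Q,
          (if Odd b then ((-(2 * b) : ℤ) : ℂ) • nord (m + b) (n - b) f else 0))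
        + (∑ b ∈ Finset.Icc (-Q) Q,
          (if Odd b then
            (((-(2 * (n - b)) : ℤ) : ℂ) * (if 0 < b ∧ m + n = 0 then (b : ℂ) else 0)
             + ((-(2 * b) : ℤ) : ℂ)
               * (if 0 < m + b ∧ m + n = 0 then ((m + b : ℤ) : ℂ) else 0)) else 0)) • f := by
    rw [main1, Finset.sum_congr rfl split, Finset.sum_add_distrib, Finset.sum_add_distrib,
      Finset.sum_smul]
  -- the common core interval
  set Z : ℤ := (N : ℤ) + 2 * (j.natAbs : ℤ) + 2 * (k.natAbs : ℤ) + 2 with hZ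
  have core1 : (∑ b ∈ Finset.Icc (-Q) Q,
          (if Odd b then ((-(2 * (n - b)) : ℤ) : ℂ) • nord b ((m + n) - b) f else 0))
      = ∑ b ∈ Finset.Icc (-Z) Z,
          (if Odd b then ((-(2 * (n - b)) : ℤ) : ℂ) • nord b ((m + n) - b) f else 0) := by
    refine (Finset.sum_subset (fun x hx => ?_) fun x hx hnx => ?_).symm
    · simp only [Finset.mem_Icc] at hx ⊢; omega
    · simp only [Finset.mem_Icc] at hx hnx
      by_cases hOdd : Odd x
      · rw [if_pos hOdd, nord_vanish hN (by omega), smul_zero]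
      · rw [if_neg hOdd]
  have core2 : (∑ b ∈ Finset.Icc (-Q) Q,
          (if Odd b then ((-(2 * b) : ℤ) : ℂ) • nord (m + b) (n - b) f else 0))
      = ∑ b ∈ Finset.Icc (-Z) Z,
          (if Odd b then ((-(2 * (b - m)) : ℤ) : ℂ) • nord b ((m + n) - b) f else 0) := by
    have step1 : (∑ b ∈ Finset.Icc (-Q) Q,
          (if Odd b then ((-(2 * b) : ℤ) : ℂ) • nord (m + b) (n - b) f else 0))
        = ∑ b ∈ Finset.Icc (-Q + m) (Q + m),
          (if Odd b then ((-(2 * (b - m)) : ℤ) : ℂ) • nord b ((m + n) - b) f else 0) := by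
      rw [← Finset.map_add_right_Icc (-Q) Q m, Finset.sum_map]
      refine Finset.sum_congr rfl fun b _ => ?_
      simp only [addRightEmbedding_apply]
      have hOI : Odd (b + m) ↔ Odd b := by
        constructor
        · rintro ⟨t, ht⟩; exact ⟨t - j, by omega⟩
        · rintro ⟨t, ht⟩; exact ⟨t + j, by omega⟩
      by_cases hOdd : Odd b
      · rw [if_pos (hOI.mpr hOdd), if_pos hOdd,
          show (b + m - m : ℤ) = b from by ring,
          show ((m + n) - (b + m) : ℤ) = n - b from by ring,
          show (b + m : ℤ) = m + b from by ring]
      · rw [if_neg (fun h => hOdd (hOI.mp h)), if_neg hOdd]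
    rw [step1]
    refine (Finset.sum_subset (fun x hx => ?_) fun x hx hnx => ?_).symm
    · simp only [Finset.mem_Icc] at hx ⊢; omega
    · simp only [Finset.mem_Icc] at hx hnx
      by_cases hOdd : Odd x
      · rw [if_pos hOdd, nord_vanish hN (by omega), smul_zero]
      · rw [if_neg hOdd]
  have merge : (∑ b ∈ Finset.Icc (-Z) Z,
          (if Odd b then ((-(2 * (n - b)) : ℤ) : ℂ) • nord b ((m + n) - b) f else 0))
        + (∑ b ∈ Finset.Icc (-Z) Z,
          (if Odd b then ((-(2 * (b - m)) : ℤ) : ℂ) • nord b ((m + n) - b) f else 0))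
      = ((4 * (j - k) : ℤ) : ℂ) • TTL (m + n) Z f := by
    rw [← Finset.sum_add_distrib, TTL_apply, Finset.smul_sum]
    refine Finset.sum_congr rfl fun b _ => ?_
    by_cases hOdd : Odd b
    · rw [if_pos hOdd, if_pos hOdd, if_pos hOdd, ← add_smul]
      congr 1
      exact_mod_cast (show (-(2 * (n - b))) + (-(2 * (b - m))) = 4 * (j - k) from by omega)
    · rw [if_neg hOdd, if_neg hOdd, if_neg hOdd, add_zero, smul_zero]
  have rep3 : TTL (m + n) Z f = Tn (m + n) f := (Tn_eq_TTL hN (by omega) (by omega)).symm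
  have S3 : (∑ b ∈ Finset.Icc (-Q) Q,
          (if Odd b then
            (((-(2 * (n - b)) : ℤ) : ℂ) * (if 0 < b ∧ m + n = 0 then (b : ℂ) else 0)
             + ((-(2 * b) : ℤ) : ℂ)
               * (if 0 < m + b ∧ m + n = 0 then ((m + b : ℤ) : ℂ) else 0)) else 0))
      = (if j + k = 0 then ((j - k : ℤ) : ℂ) else 0) := by
    by_cases hs0 : m + n = 0
    · rw [if_pos (show j + k = 0 from by omega)]
      rcases hspec (by omega) with ⟨hj1, hk1⟩ | ⟨hj0, hk0⟩
      · subst hj1; subst hk1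
        obtain rfl : m = 2 := by omega
        obtain rfl : n = -2 := by omega
        have ev : ∀ b ∈ Finset.Icc (-Q) Q,
            (if Odd b then
              (((-(2 * (-2 - b)) : ℤ) : ℂ) * (if 0 < b ∧ 2 + -2 = 0 then (b : ℂ) else 0)
               + ((-(2 * b) : ℤ) : ℂ)
                 * (if 0 < 2 + b ∧ 2 + -2 = 0 then ((2 + b : ℤ) : ℂ) else 0)) else 0)
            = (if b = -1 then ((1 - -1 : ℤ) : ℂ) else 0) := by
          intro b _
          by_cases hb1 : b = -1
          · subst hb1
            rw [if_pos (show Odd (-1 : ℤ) from ⟨-1, by norm_num⟩), if_pos rfl,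
              if_neg (by rintro ⟨h, -⟩; omega), if_pos ⟨by norm_num, by norm_num⟩]
            push_cast
            ring
          · by_cases hOdd : Odd b
            · rw [if_pos hOdd, if_neg hb1]
              obtain ⟨t, rfl⟩ := hOdd
              by_cases hbp : 0 < 2 * t + 1
              · rw [if_pos ⟨hbp, by norm_num⟩, if_pos ⟨by omega, by norm_num⟩]
                push_cast
                ring
              · rw [if_neg (by rintro ⟨h, -⟩; omega), if_neg (by rintro ⟨h, -⟩; omega)]
                ring
            · rw [if_neg hOdd, if_neg hb1]
        rw [Finset.sum_congr rfl ev, Finset.sum_ite_eq' _ (-1) (fun _ => ((1 - -1 : ℤ) : ℂ)),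
          if_pos (by simp only [Finset.mem_Icc]; omega)]
      · subst hj0; subst hk0
        obtain rfl : m = 0 := by omega
        obtain rfl : n = 0 := by omega
        rw [show ((0 - 0 : ℤ) : ℂ) = 0 from by norm_num]
        refine Finset.sum_eq_zero fun b _ => ?_
        by_cases hOdd : Odd b
        · rw [if_pos hOdd]
          by_cases hbp : 0 < b
          · rw [if_pos ⟨hbp, by norm_num⟩, if_pos ⟨by omega, by norm_num⟩]
            push_cast
            ring
          · rw [if_neg (by rintro ⟨h, -⟩; omega), if_neg (by rintro ⟨h, -⟩; omega)]
            ring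
        · rw [if_neg hOdd]
    · rw [if_neg (show ¬(j + k = 0) from by omega)]
      refine Finset.sum_eq_zero fun b _ => ?_
      by_cases hOdd : Odd b
      · rw [if_pos hOdd, if_neg (by rintro ⟨-, h⟩; omega), if_neg (by rintro ⟨-, h⟩; omega)]
        ring
      · rw [if_neg hOdd]
  rw [main2, core1, core2, S3, merge, rep3]

lemma Tn_add (n : ℤ) (x y : R) : Tn n (x + y) = Tn n x + Tn n y := by
  obtain ⟨Nx, hx⟩ := bnd_exists x
  obtain ⟨Ny, hy⟩ := bnd_exists y
  have hx' : Bnd (max Nx Ny) x := hx.mono (le_max_left _ _)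
  have hy' : Bnd (max Nx Ny) y := hy.mono (le_max_right _ _)
  rw [Tn_eq_TTL (hx'.add hy') (M := ((max Nx Ny : ℕ) : ℤ) + n.natAbs) (by omega) (by omega),
    Tn_eq_TTL hx' (M := ((max Nx Ny : ℕ) : ℤ) + n.natAbs) (by omega) (by omega),
    Tn_eq_TTL hy' (M := ((max Nx Ny : ℕ) : ℤ) + n.natAbs) (by omega) (by omega), map_add]

lemma Tn_smul (n : ℤ) (c : ℂ) (x : R) : Tn n (c • x) = c • Tn n x := by
  obtain ⟨Nx, hx⟩ := bnd_exists x
  rw [Tn_eq_TTL (hx.smul c) (M := (Nx : ℤ) + n.natAbs) (by omega) (by omega),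
    Tn_eq_TTL hx (M := (Nx : ℤ) + n.natAbs) (by omega) (by omega), map_smul]

lemma V1_eq (i : ℤ) (g : R) :
    V1 i g = (1 / 4 : ℂ) • Tn (2 * i) g + (if i = 0 then (1 / 16 : ℂ) else 0) • g := by
  show (1 / 4 : ℂ) • Tn (2 * i) g + (if i = 0 then (1 / 16 : ℂ) • g else 0) = _
  congr 1
  split_ifs
  · rfl
  · rw [zero_smul]

lemma V1_comm (j k : ℤ) (hspec : j + k = 0 → (j = 1 ∧ k = -1) ∨ (j = 0 ∧ k = 0)) (f : R) :
    V1 j (V1 k f) - V1 k (V1 j f) = ((j - k : ℤ) : ℂ) • V1 (j + k) f := by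
  have key := T_comm j k (2 * j) (2 * k) rfl rfl hspec f
  rw [sub_eq_iff_eq_add] at key
  rw [V1_eq j (V1 k f), V1_eq k f, V1_eq k (V1 j f), V1_eq j f, V1_eq (j + k) f,
    show (2 * (j + k) : ℤ) = 2 * j + 2 * k from by ring,
    Tn_add, Tn_smul, Tn_smul, Tn_add, Tn_smul, Tn_smul, key]
  by_cases hjk : j + k = 0
  · rw [if_pos hjk, if_pos hjk]
    push_cast
    module
  · rw [if_neg hjk, if_neg hjk]
    push_cast
    module

end VirAux

/-- Proposition 6.1, case ν = 1: the operators `V_{1,j}`,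
`j ≥ -1`, satisfy the Virasoro commutation relations
`[V_{1,j}, V_{1,k}] = (j - k)·V_{1,j+k}`. -/
theorem virasoro_BurgersKdV_nu_one :
    ∀ j k : ℤ, -1 ≤ j → -1 ≤ k → -1 ≤ j + k → ∀ f : MvPolynomial ℕ ℂ,
      V1 j (V1 k f) - V1 k (V1 j f) = ((j - k : ℤ) : ℂ) • V1 (j + k) f := by
  intro j k hj hk hjk f
  by_cases hc : j = -1 ∧ k = 1
  · obtain ⟨rfl, rfl⟩ := hc
    have h2 := VirAux.V1_comm 1 (-1) (fun _ => Or.inl ⟨rfl, rfl⟩) f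
    rw [show (-1 + 1 : ℤ) = (1 + -1 : ℤ) from by norm_num,
      show ((-1 - 1 : ℤ) : ℂ) = -((1 - -1 : ℤ) : ℂ) from by push_cast; ring,
      neg_smul, ← h2]
    abel
  · exact VirAux.V1_comm j k (fun h0 => by omega) f
end

section
/- (Corollary 3.2, identity (3.7): the first differential Fay identity of the KP-mKP hierarchy.) Suppose τ₁, τ₂ : (ℕ → ℂ) × (ℕ → ℂ) → ℂ are continuous and shift-smooth, and that (τ₁, τ₂) satisfies the KP-mKP Fay identity. Then for all x, y : ℕ → ℂ and all nonzero a, b ∈ ℂ: τ₁(x,y) · ∂₁τ₂(x + [a], y − [b]) − ∂₁τ₁(x,y) · τ₂(x + [a], y − [b]) = (1/a) · ( τ₁(x,y) · τ₂(x + [a], y − [b]) − τ₁(x + [a], y) · τ₂(x, y − [b]) ). -/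
/-- The shift `[s] : ℕ → ℂ`, `[s](k) = s^(k+1)/(k+1)`, representing the
sequence `(s, s²/2, s³/3, …)` of time variables. -/
noncomputable def sh (s : ℂ) : ℕ → ℂ := fun k => s ^ (k + 1) / ((k : ℂ) + 1)

/-- `∂₁ f (x, y)`: derivative of `s ↦ f(x + [s], y)` at `s = 0`. -/
noncomputable def d1 (f : (ℕ → ℂ) × (ℕ → ℂ) → ℂ) (x y : ℕ → ℂ) : ℂ :=
  deriv (fun s : ℂ => f (x + sh s, y)) 0

/-- `∂₂ f (x, y)`: derivative of `s ↦ f(x, y + [s])` at `s = 0`. -/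
noncomputable def d2 (f : (ℕ → ℂ) × (ℕ → ℂ) → ℂ) (x y : ℕ → ℂ) : ℂ :=
  deriv (fun s : ℂ => f (x, y + sh s)) 0

/-- `f` is shift-smooth: for every `(x, y)` the maps `s ↦ f(x + [s], y)` and
`s ↦ f(x, y + [s])` are differentiable on all of ℂ, and the maps
`(s, x, y) ↦ (d/ds) f(x + [s], y)` and `(s, x, y) ↦ (d/ds) f(x, y + [s])`
are jointly continuous. -/
def ShiftSmooth (f : (ℕ → ℂ) × (ℕ → ℂ) → ℂ) : Prop :=
  (∀ x y : ℕ → ℂ, Differentiable ℂ (fun s : ℂ => f (x + sh s, y))) ∧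
  (∀ x y : ℕ → ℂ, Differentiable ℂ (fun s : ℂ => f (x, y + sh s))) ∧
  Continuous (fun q : ℂ × ((ℕ → ℂ) × (ℕ → ℂ)) =>
    deriv (fun s : ℂ => f (q.2.1 + sh s, q.2.2)) q.1) ∧
  Continuous (fun q : ℂ × ((ℕ → ℂ) × (ℕ → ℂ)) =>
    deriv (fun s : ℂ => f (q.2.1, q.2.2 + sh s)) q.1)

/-- The KP-mKP Fay identity (equation (3.1) of the paper) for a pair of tau
functions `(τ₁, τ₂)`. -/
def KPmKPFay (τ₁ τ₂ : (ℕ → ℂ) × (ℕ → ℂ) → ℂ) : Prop :=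
  ∀ x y : ℕ → ℂ, ∀ s0 s1 s2 s3 t0 t1 t2 t3 : ℂ,
    s0 ≠ 0 → s1 ≠ 0 → s2 ≠ 0 → s3 ≠ 0 →
    s0 ≠ s1 → s0 ≠ s2 → s0 ≠ s3 → s1 ≠ s2 → s1 ≠ s3 → s2 ≠ s3 →
    t0 ≠ 0 → t1 ≠ 0 → t2 ≠ 0 → t3 ≠ 0 →
    t0 ≠ t1 → t0 ≠ t2 → t0 ≠ t3 → t1 ≠ t2 → t1 ≠ t3 → t2 ≠ t3 →
    (s1 * (s1 - s0) / ((s1 - s2) * (s1 - s3)))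
        * τ₁ (x + sh s2 + sh s3, y + sh t1 + sh t2 + sh t3)
        * τ₂ (x + sh s0 + sh s1, y + sh t0)
      + (s2 * (s2 - s0) / ((s2 - s3) * (s2 - s1)))
        * τ₁ (x + sh s3 + sh s1, y + sh t1 + sh t2 + sh t3)
        * τ₂ (x + sh s0 + sh s2, y + sh t0)
      + (s3 * (s3 - s0) / ((s3 - s1) * (s3 - s2)))
        * τ₁ (x + sh s1 + sh s2, y + sh t1 + sh t2 + sh t3)
        * τ₂ (x + sh s0 + sh s3, y + sh t0)
    = (t1 * (t1 - t0) / ((t1 - t2) * (t1 - t3)))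
        * τ₂ (x + sh s1 + sh s2 + sh s3, y + sh t2 + sh t3)
        * τ₁ (x + sh s0, y + sh t0 + sh t1)
      + (t2 * (t2 - t0) / ((t2 - t3) * (t2 - t1)))
        * τ₂ (x + sh s1 + sh s2 + sh s3, y + sh t3 + sh t1)
        * τ₁ (x + sh s0, y + sh t0 + sh t2)
      + (t3 * (t3 - t0) / ((t3 - t1) * (t3 - t2)))
        * τ₂ (x + sh s1 + sh s2 + sh s3, y + sh t1 + sh t2)
        * τ₁ (x + sh s0, y + sh t0 + sh t3)

open scoped Topology
open Filter

@[fun_prop] lemma continuous_sh : Continuous sh :=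
  continuous_pi fun k => (continuous_id.pow (k + 1)).div_const _

lemma sh_zero : sh 0 = 0 := funext fun k => by simp [sh]

/-- limit lemma: if `f` is continuous at `0` and vanishes off a finite set
(away from `0`), then `f 0 = 0`. -/
lemma key_lim (f : ℂ → ℂ) (S : Set ℂ) (hSf : S.Finite) (h0 : (0:ℂ) ∉ S)
    (hf : ContinuousAt f 0)
    (h : ∀ s : ℂ, s ≠ 0 → s ∉ S → f s = 0) : f 0 = 0 := by
  have h1 : Tendsto f (𝓝[≠] (0:ℂ)) (𝓝 (f 0)) := hf.continuousWithinAt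
  have hmem : Sᶜ ∈ 𝓝 (0:ℂ) :=
    (hSf.isClosed.isOpen_compl).mem_nhds h0
  have h2 : f =ᶠ[𝓝[≠] (0:ℂ)] fun _ => 0 := by
    filter_upwards [self_mem_nhdsWithin, mem_nhdsWithin_of_mem_nhds hmem] with s hs hs'
    exact h s hs hs'
  exact tendsto_nhds_unique (h1.congr' h2) tendsto_const_nhds

noncomputable def fayGap (τ₁ τ₂ : (ℕ → ℂ) × (ℕ → ℂ) → ℂ)
    (x y : ℕ → ℂ) (s0 s1 s2 s3 t0 t1 t2 t3 : ℂ) : ℂ :=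
    (s1 * (s1 - s0) / ((s1 - s2) * (s1 - s3)))
        * τ₁ (x + sh s2 + sh s3, y + sh t1 + sh t2 + sh t3)
        * τ₂ (x + sh s0 + sh s1, y + sh t0)
      + (s2 * (s2 - s0) / ((s2 - s3) * (s2 - s1)))
        * τ₁ (x + sh s3 + sh s1, y + sh t1 + sh t2 + sh t3)
        * τ₂ (x + sh s0 + sh s2, y + sh t0)
      + (s3 * (s3 - s0) / ((s3 - s1) * (s3 - s2)))
        * τ₁ (x + sh s1 + sh s2, y + sh t1 + sh t2 + sh t3)
        * τ₂ (x + sh s0 + sh s3, y + sh t0)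
      - (t1 * (t1 - t0) / ((t1 - t2) * (t1 - t3)))
        * τ₂ (x + sh s1 + sh s2 + sh s3, y + sh t2 + sh t3)
        * τ₁ (x + sh s0, y + sh t0 + sh t1)
      - (t2 * (t2 - t0) / ((t2 - t3) * (t2 - t1)))
        * τ₂ (x + sh s1 + sh s2 + sh s3, y + sh t3 + sh t1)
        * τ₁ (x + sh s0, y + sh t0 + sh t2)
      - (t3 * (t3 - t0) / ((t3 - t1) * (t3 - t2)))
        * τ₂ (x + sh s1 + sh s2 + sh s3, y + sh t1 + sh t2)
        * τ₁ (x + sh s0, y + sh t0 + sh t3)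

noncomputable def gap2 (τ₁ τ₂ : (ℕ → ℂ) × (ℕ → ℂ) → ℂ)
    (x y : ℕ → ℂ) (s0 s1 s2 t0 t1 t2 : ℂ) : ℂ :=
    ((s1 - s0) / (s1 - s2)) * τ₁ (x + sh s2, y + sh t1 + sh t2)
        * τ₂ (x + sh s0 + sh s1, y + sh t0)
      + ((s2 - s0) / (s2 - s1)) * τ₁ (x + sh s1, y + sh t1 + sh t2)
        * τ₂ (x + sh s0 + sh s2, y + sh t0)
      - ((t1 - t0) / (t1 - t2)) * τ₂ (x + sh s1 + sh s2, y + sh t2)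
        * τ₁ (x + sh s0, y + sh t0 + sh t1)
      - ((t2 - t0) / (t2 - t1)) * τ₂ (x + sh s1 + sh s2, y + sh t1)
        * τ₁ (x + sh s0, y + sh t0 + sh t2)

-- step 1: s3 -> 0
lemma step1 (τ₁ τ₂ : (ℕ → ℂ) × (ℕ → ℂ) → ℂ)
    (hc1 : Continuous τ₁) (hc2 : Continuous τ₂) (hFay : KPmKPFay τ₁ τ₂)
    (x y : ℕ → ℂ) (s0 s1 s2 t0 t1 t2 t3 : ℂ)
    (hs0 : s0 ≠ 0) (hs1 : s1 ≠ 0) (hs2 : s2 ≠ 0)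
    (h01 : s0 ≠ s1) (h02 : s0 ≠ s2) (h12 : s1 ≠ s2)
    (ht0 : t0 ≠ 0) (ht1 : t1 ≠ 0) (ht2 : t2 ≠ 0) (ht3 : t3 ≠ 0)
    (g01 : t0 ≠ t1) (g02 : t0 ≠ t2) (g03 : t0 ≠ t3)
    (g12 : t1 ≠ t2) (g13 : t1 ≠ t3) (g23 : t2 ≠ t3) :
    fayGap τ₁ τ₂ x y s0 s1 s2 0 t0 t1 t2 t3 = 0 := by
  have h10 := h01.symm; have h20 := h02.symm; have h21 := h12.symm
  have g10 := g01.symm; have g20 := g02.symm; have g30 := g03.symm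
  have g21 := g12.symm; have g31 := g13.symm; have g32 := g23.symm
  have hs0' : (0:ℂ) ≠ s0 := hs0.symm; have hs1' : (0:ℂ) ≠ s1 := hs1.symm
  have hs2' : (0:ℂ) ≠ s2 := hs2.symm
  have ht0' : (0:ℂ) ≠ t0 := ht0.symm; have ht1' : (0:ℂ) ≠ t1 := ht1.symm
  have ht2' : (0:ℂ) ≠ t2 := ht2.symm; have ht3' : (0:ℂ) ≠ t3 := ht3.symm
  refine key_lim (fun s => fayGap τ₁ τ₂ x y s0 s1 s2 s t0 t1 t2 t3)
    {s0, s1, s2} (Set.toFinite _) ?_ ?_ ?_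
  · simp only [Set.mem_insert_iff, Set.mem_singleton_iff, not_or]
    exact ⟨Ne.symm hs0, Ne.symm hs1, Ne.symm hs2⟩
  · unfold fayGap
    fun_prop (disch := first
      | exact mul_ne_zero (sub_ne_zero.mpr ‹_›) (sub_ne_zero.mpr ‹_›)
      | exact sub_ne_zero.mpr ‹_›)
  · intro s hs hS
    simp only [Set.mem_insert_iff, Set.mem_singleton_iff, not_or] at hS
    obtain ⟨hS0, hS1, hS2⟩ := hS
    unfold fayGap
    linear_combination hFay x y s0 s1 s2 s t0 t1 t2 t3 hs0 hs1 hs2 hs h01 h02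
      (Ne.symm hS0) h12 (Ne.symm hS1) (Ne.symm hS2) ht0 ht1 ht2 ht3 g01 g02 g03 g12 g13 g23

-- step 2: t3 -> 0
lemma step2 (τ₁ τ₂ : (ℕ → ℂ) × (ℕ → ℂ) → ℂ)
    (hc1 : Continuous τ₁) (hc2 : Continuous τ₂) (hFay : KPmKPFay τ₁ τ₂)
    (x y : ℕ → ℂ) (s0 s1 s2 t0 t1 t2 : ℂ)
    (hs0 : s0 ≠ 0) (hs1 : s1 ≠ 0) (hs2 : s2 ≠ 0)
    (h01 : s0 ≠ s1) (h02 : s0 ≠ s2) (h12 : s1 ≠ s2)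
    (ht0 : t0 ≠ 0) (ht1 : t1 ≠ 0) (ht2 : t2 ≠ 0)
    (g01 : t0 ≠ t1) (g02 : t0 ≠ t2) (g12 : t1 ≠ t2) :
    fayGap τ₁ τ₂ x y s0 s1 s2 0 t0 t1 t2 0 = 0 := by
  have h10 := h01.symm; have h20 := h02.symm; have h21 := h12.symm
  have g10 := g01.symm; have g20 := g02.symm; have g21 := g12.symm
  have hs0' : (0:ℂ) ≠ s0 := hs0.symm; have hs1' : (0:ℂ) ≠ s1 := hs1.symm
  have hs2' : (0:ℂ) ≠ s2 := hs2.symm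
  have ht0' : (0:ℂ) ≠ t0 := ht0.symm; have ht1' : (0:ℂ) ≠ t1 := ht1.symm
  have ht2' : (0:ℂ) ≠ t2 := ht2.symm
  refine key_lim (fun t => fayGap τ₁ τ₂ x y s0 s1 s2 0 t0 t1 t2 t)
    {t0, t1, t2} (Set.toFinite _) ?_ ?_ ?_
  · simp only [Set.mem_insert_iff, Set.mem_singleton_iff, not_or]
    exact ⟨ht0', ht1', ht2'⟩
  · unfold fayGap
    fun_prop (disch := first
      | exact mul_ne_zero (sub_ne_zero.mpr ‹_›) (sub_ne_zero.mpr ‹_›)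
      | exact sub_ne_zero.mpr ‹_›)
  · intro t ht hS
    simp only [Set.mem_insert_iff, Set.mem_singleton_iff, not_or] at hS
    obtain ⟨hS0, hS1, hS2⟩ := hS
    exact step1 τ₁ τ₂ hc1 hc2 hFay x y s0 s1 s2 t0 t1 t2 t hs0 hs1 hs2 h01 h02 h12
      ht0 ht1 ht2 ht g01 g02 (Ne.symm hS0) g12 (Ne.symm hS1) (Ne.symm hS2)

-- conversion to the simplified 4-term gap
lemma gap2_eq (τ₁ τ₂ : (ℕ → ℂ) × (ℕ → ℂ) → ℂ)
    (hc1 : Continuous τ₁) (hc2 : Continuous τ₂) (hFay : KPmKPFay τ₁ τ₂)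
    (x y : ℕ → ℂ) (s0 s1 s2 t0 t1 t2 : ℂ)
    (hs0 : s0 ≠ 0) (hs1 : s1 ≠ 0) (hs2 : s2 ≠ 0)
    (h01 : s0 ≠ s1) (h02 : s0 ≠ s2) (h12 : s1 ≠ s2)
    (ht0 : t0 ≠ 0) (ht1 : t1 ≠ 0) (ht2 : t2 ≠ 0)
    (g01 : t0 ≠ t1) (g02 : t0 ≠ t2) (g12 : t1 ≠ t2) :
    gap2 τ₁ τ₂ x y s0 s1 s2 t0 t1 t2 = 0 := by
  have h := step2 τ₁ τ₂ hc1 hc2 hFay x y s0 s1 s2 t0 t1 t2 hs0 hs1 hs2 h01 h02 h12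
    ht0 ht1 ht2 g01 g02 g12
  unfold fayGap at h
  simp only [sh_zero, add_zero, sub_zero, zero_mul, zero_div, mul_zero] at h
  have e1 : s1 * (s1 - s0) / ((s1 - s2) * s1) = (s1 - s0) / (s1 - s2) := by
    rw [mul_comm (s1 - s2) s1, mul_div_mul_left _ _ hs1]
  have e2 : s2 * (s2 - s0) / (s2 * (s2 - s1)) = (s2 - s0) / (s2 - s1) :=
    mul_div_mul_left _ _ hs2
  have e3 : t1 * (t1 - t0) / ((t1 - t2) * t1) = (t1 - t0) / (t1 - t2) := by
    rw [mul_comm (t1 - t2) t1, mul_div_mul_left _ _ ht1]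
  have e4 : t2 * (t2 - t0) / (t2 * (t2 - t1)) = (t2 - t0) / (t2 - t1) :=
    mul_div_mul_left _ _ ht2
  rw [e1, e2, e3, e4] at h
  unfold gap2
  linear_combination h

-- step 3: s2 -> 0
lemma step3 (τ₁ τ₂ : (ℕ → ℂ) × (ℕ → ℂ) → ℂ)
    (hc1 : Continuous τ₁) (hc2 : Continuous τ₂) (hFay : KPmKPFay τ₁ τ₂)
    (x y : ℕ → ℂ) (s0 s1 t0 t1 t2 : ℂ)
    (hs0 : s0 ≠ 0) (hs1 : s1 ≠ 0) (h01 : s0 ≠ s1)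
    (ht0 : t0 ≠ 0) (ht1 : t1 ≠ 0) (ht2 : t2 ≠ 0)
    (g01 : t0 ≠ t1) (g02 : t0 ≠ t2) (g12 : t1 ≠ t2) :
    gap2 τ₁ τ₂ x y s0 s1 0 t0 t1 t2 = 0 := by
  have h10 := h01.symm
  have g10 := g01.symm; have g20 := g02.symm; have g21 := g12.symm
  have hs0' : (0:ℂ) ≠ s0 := hs0.symm; have hs1' : (0:ℂ) ≠ s1 := hs1.symm
  have ht0' : (0:ℂ) ≠ t0 := ht0.symm; have ht1' : (0:ℂ) ≠ t1 := ht1.symm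
  have ht2' : (0:ℂ) ≠ t2 := ht2.symm
  refine key_lim (fun s => gap2 τ₁ τ₂ x y s0 s1 s t0 t1 t2)
    {s0, s1} (Set.toFinite _) ?_ ?_ ?_
  · simp only [Set.mem_insert_iff, Set.mem_singleton_iff, not_or]
    exact ⟨hs0', hs1'⟩
  · unfold gap2
    fun_prop (disch := first
      | exact mul_ne_zero (sub_ne_zero.mpr ‹_›) (sub_ne_zero.mpr ‹_›)
      | exact sub_ne_zero.mpr ‹_›)
  · intro s hs hS
    simp only [Set.mem_insert_iff, Set.mem_singleton_iff, not_or] at hS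
    obtain ⟨hS0, hS1⟩ := hS
    exact gap2_eq τ₁ τ₂ hc1 hc2 hFay x y s0 s1 s t0 t1 t2 hs0 hs1 hs h01
      (Ne.symm hS0) (Ne.symm hS1) ht0 ht1 ht2 g01 g02 g12

-- step 4: t2 -> 0
lemma step4 (τ₁ τ₂ : (ℕ → ℂ) × (ℕ → ℂ) → ℂ)
    (hc1 : Continuous τ₁) (hc2 : Continuous τ₂) (hFay : KPmKPFay τ₁ τ₂)
    (x y : ℕ → ℂ) (s0 s1 t0 t1 : ℂ)
    (hs0 : s0 ≠ 0) (hs1 : s1 ≠ 0) (h01 : s0 ≠ s1)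
    (ht0 : t0 ≠ 0) (ht1 : t1 ≠ 0) (g01 : t0 ≠ t1) :
    gap2 τ₁ τ₂ x y s0 s1 0 t0 t1 0 = 0 := by
  have h10 := h01.symm; have g10 := g01.symm
  have hs0' : (0:ℂ) ≠ s0 := hs0.symm; have hs1' : (0:ℂ) ≠ s1 := hs1.symm
  have ht0' : (0:ℂ) ≠ t0 := ht0.symm; have ht1' : (0:ℂ) ≠ t1 := ht1.symm
  refine key_lim (fun t => gap2 τ₁ τ₂ x y s0 s1 0 t0 t1 t)
    {t0, t1} (Set.toFinite _) ?_ ?_ ?_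
  · simp only [Set.mem_insert_iff, Set.mem_singleton_iff, not_or]
    exact ⟨ht0', ht1'⟩
  · unfold gap2
    fun_prop (disch := first
      | exact mul_ne_zero (sub_ne_zero.mpr ‹_›) (sub_ne_zero.mpr ‹_›)
      | exact sub_ne_zero.mpr ‹_›)
  · intro t ht hS
    simp only [Set.mem_insert_iff, Set.mem_singleton_iff, not_or] at hS
    obtain ⟨hS0, hS1⟩ := hS
    exact step3 τ₁ τ₂ hc1 hc2 hFay x y s0 s1 t0 t1 t hs0 hs1 h01 ht0 ht1 ht
      g01 (Ne.symm hS0) (Ne.symm hS1)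

-- step 5: t0 -> 0
lemma step5 (τ₁ τ₂ : (ℕ → ℂ) × (ℕ → ℂ) → ℂ)
    (hc1 : Continuous τ₁) (hc2 : Continuous τ₂) (hFay : KPmKPFay τ₁ τ₂)
    (x y : ℕ → ℂ) (s0 s1 t1 : ℂ)
    (hs0 : s0 ≠ 0) (hs1 : s1 ≠ 0) (h01 : s0 ≠ s1) (ht1 : t1 ≠ 0) :
    gap2 τ₁ τ₂ x y s0 s1 0 0 t1 0 = 0 := by
  have h10 := h01.symm
  have hs0' : (0:ℂ) ≠ s0 := hs0.symm; have hs1' : (0:ℂ) ≠ s1 := hs1.symm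
  have ht1' : (0:ℂ) ≠ t1 := ht1.symm
  refine key_lim (fun t => gap2 τ₁ τ₂ x y s0 s1 0 t t1 0)
    {t1} (Set.toFinite _) ?_ ?_ ?_
  · simp only [Set.mem_singleton_iff]
    exact ht1'
  · unfold gap2
    fun_prop (disch := first
      | exact mul_ne_zero (sub_ne_zero.mpr ‹_›) (sub_ne_zero.mpr ‹_›)
      | exact sub_ne_zero.mpr ‹_›)
  · intro t ht hS
    simp only [Set.mem_singleton_iff] at hS
    exact step4 τ₁ τ₂ hc1 hc2 hFay x y s0 s1 t t1 hs0 hs1 h01 ht ht1 hS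

-- the clean three-term identity
lemma fay_clean (τ₁ τ₂ : (ℕ → ℂ) × (ℕ → ℂ) → ℂ)
    (hc1 : Continuous τ₁) (hc2 : Continuous τ₂) (hFay : KPmKPFay τ₁ τ₂)
    (x y : ℕ → ℂ) (s0 s1 t1 : ℂ)
    (hs0 : s0 ≠ 0) (hs1 : s1 ≠ 0) (h01 : s0 ≠ s1) (ht1 : t1 ≠ 0) :
    ((s1 - s0) / s1) * τ₁ (x, y + sh t1) * τ₂ (x + sh s0 + sh s1, y)
      + (s0 / s1) * τ₁ (x + sh s1, y + sh t1) * τ₂ (x + sh s0, y)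
    = τ₂ (x + sh s1, y) * τ₁ (x + sh s0, y + sh t1) := by
  have h := step5 τ₁ τ₂ hc1 hc2 hFay x y s0 s1 t1 hs0 hs1 h01 ht1
  unfold gap2 at h
  simp only [sh_zero, add_zero, sub_zero, zero_div, zero_mul] at h
  rw [div_self ht1] at h
  have e : (0 - s0) / (0 - s1) = s0 / s1 := by
    rw [zero_sub, zero_sub, neg_div_neg_eq]
  rw [e] at h
  linear_combination h

/-- Corollary 3.2, identity (3.7): the first differential Fay
identity of the KP-mKP hierarchy. -/
theorem diffFay_one (τ₁ τ₂ : (ℕ → ℂ) × (ℕ → ℂ) → ℂ)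
    (hc1 : Continuous τ₁) (hc2 : Continuous τ₂)
    (hs1 : ShiftSmooth τ₁) (hs2 : ShiftSmooth τ₂)
    (hFay : KPmKPFay τ₁ τ₂) :
    ∀ x y : ℕ → ℂ, ∀ a b : ℂ, a ≠ 0 → b ≠ 0 →
      τ₁ (x, y) * d1 τ₂ (x + sh a) (y - sh b)
        - d1 τ₁ x y * τ₂ (x + sh a, y - sh b)
      = (1 / a) * (τ₁ (x, y) * τ₂ (x + sh a, y - sh b)
          - τ₁ (x + sh a, y) * τ₂ (x, y - sh b)) := by
  obtain ⟨hd1₁, -, -, -⟩ := hs1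
  obtain ⟨hd1₂, -, -, -⟩ := hs2
  intro x y a b ha hb
  set Y := y - sh b with hYdef
  have hYb : Y + sh b = y := sub_add_cancel y (sh b)
  have hT2 : HasDerivAt (fun s : ℂ => τ₂ (x + sh a + sh s, Y)) (d1 τ₂ (x + sh a) Y) 0 :=
    ((hd1₂ (x + sh a) Y) 0).hasDerivAt
  have hT1 : HasDerivAt (fun s : ℂ => τ₁ (x + sh s, y)) (d1 τ₁ x y) 0 :=
    ((hd1₁ x y) 0).hasDerivAt
  have hU2 : HasDerivAt (fun s : ℂ => τ₂ (x + sh s, Y)) (d1 τ₂ x Y) 0 :=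
    ((hd1₂ x Y) 0).hasDerivAt
  have hf1 : HasDerivAt (fun s : ℂ => (s - a) * (τ₁ (x, y) * τ₂ (x + sh a + sh s, Y)))
      (1 * (τ₁ (x, y) * τ₂ (x + sh a + sh 0, Y))
        + (0 - a) * (τ₁ (x, y) * d1 τ₂ (x + sh a) Y)) 0 :=
    ((hasDerivAt_id 0).sub_const a).mul (hT2.const_mul (τ₁ (x, y)))
  have hf2 : HasDerivAt (fun s : ℂ => a * (τ₁ (x + sh s, y) * τ₂ (x + sh a, Y)))
      (a * (d1 τ₁ x y * τ₂ (x + sh a, Y))) 0 :=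
    (hT1.mul_const _).const_mul a
  have hf3 : HasDerivAt (fun s : ℂ => s * (τ₂ (x + sh s, Y) * τ₁ (x + sh a, y)))
      (1 * (τ₂ (x + sh 0, Y) * τ₁ (x + sh a, y))
        + 0 * (d1 τ₂ x Y * τ₁ (x + sh a, y))) 0 :=
    (hasDerivAt_id 0).mul (hU2.mul_const _)
  have hΦ := (hf1.add hf2).sub hf3
  have hΦ0 : (fun s : ℂ => (s - a) * (τ₁ (x, y) * τ₂ (x + sh a + sh s, Y))
        + a * (τ₁ (x + sh s, y) * τ₂ (x + sh a, Y))
        - s * (τ₂ (x + sh s, Y) * τ₁ (x + sh a, y))) =ᶠ[𝓝 (0:ℂ)] fun _ => 0 := by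
    have hmem : {s : ℂ | s ≠ a} ∈ 𝓝 (0:ℂ) := isOpen_ne.mem_nhds (Ne.symm ha)
    filter_upwards [hmem] with s hsa
    rcases eq_or_ne s 0 with rfl | hs0
    · simp only [sh_zero, add_zero]; ring
    · have h := fay_clean τ₁ τ₂ hc1 hc2 hFay x Y a s b ha hs0 (Ne.symm hsa) hb
      rw [hYb] at h
      field_simp at h
      linear_combination h
  have hDval : 1 * (τ₁ (x, y) * τ₂ (x + sh a + sh 0, Y))
        + (0 - a) * (τ₁ (x, y) * d1 τ₂ (x + sh a) Y)
        + a * (d1 τ₁ x y * τ₂ (x + sh a, Y))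
        - (1 * (τ₂ (x + sh 0, Y) * τ₁ (x + sh a, y))
          + 0 * (d1 τ₂ x Y * τ₁ (x + sh a, y))) = 0 := by
    rw [← hΦ.deriv]; refine (hΦ0.deriv_eq).trans ?_
    simp
  simp only [sh_zero, add_zero] at hDval
  field_simp
  linear_combination -hDval
end

section
/- (Lemma 3.5, identity (3.11) with the exponential factor removed.) Suppose τ₁, τ₂ : (ℕ → ℂ) × (ℕ → ℂ) → ℂ are continuous and shift-smooth, and that (τ₁, τ₂) satisfies the second differential Fay identity. Then for all x, y : ℕ → ℂ and every nonzero b ∈ ℂ: b · ( ∂₂τ₁(x, y) · τ₂(x, y − [b]) − τ₁(x, y) · ∂₂τ₂(x, y − [b]) ) = τ₁(x, y) · τ₂(x, y − [b]) − τ₁(x, y − [b]) · τ₂(x, y). (Setting b = 1/z, this is equivalent to the paper's formula ∂₂(w₂(t₁,t₂;z)) = z · (τ₁(t₁,t₂−[z⁻¹])/τ₁(t₁,t₂)) · e^{β+ξ(t₂;z)} for the Baker-Akhiezer function w₂ = (τ₂(t₁,t₂−[z⁻¹])/τ₁(t₁,t₂)) e^{ξ(t₂;z)} with e^β = τ₂/τ₁.)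 -/
/-- The second differential Fay identity (equation (3.8) of the paper). -/
def DiffFay2 (τ₁ τ₂ : (ℕ → ℂ) × (ℕ → ℂ) → ℂ) : Prop :=
  ∀ x y : ℕ → ℂ, ∀ a b : ℂ, a ≠ 0 → b ≠ 0 →
    d2 τ₁ (x - sh a) (y + sh b) * τ₂ (x, y)
      - τ₁ (x - sh a, y + sh b) * d2 τ₂ x y
    = (1 / b) * (τ₁ (x - sh a, y + sh b) * τ₂ (x, y)
        - τ₂ (x, y + sh b) * τ₁ (x - sh a, y))

/-- Lemma 3.5, identity (3.11), exponential factor removed. -/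
theorem baker_akhiezer_d2_formula (τ₁ τ₂ : (ℕ → ℂ) × (ℕ → ℂ) → ℂ)
    (hc1 : Continuous τ₁) (hc2 : Continuous τ₂)
    (hs1 : ShiftSmooth τ₁) (hs2 : ShiftSmooth τ₂)
    (hFay : DiffFay2 τ₁ τ₂) :
    ∀ x y : ℕ → ℂ, ∀ b : ℂ, b ≠ 0 →
      b * (d2 τ₁ x y * τ₂ (x, y - sh b) - τ₁ (x, y) * d2 τ₂ x (y - sh b))
        = τ₁ (x, y) * τ₂ (x, y - sh b) - τ₁ (x, y - sh b) * τ₂ (x, y) := by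
  intro x y b hb
  have hsh : Continuous sh := by
    apply continuous_pi
    intro k
    exact (continuous_pow (k+1)).div_const _
  have hsh0 : sh 0 = 0 := by
    funext k; simp [sh]
  -- the difference function in a
  set F : ℂ → ℂ := fun a =>
    b * (d2 τ₁ (x - sh a) y * τ₂ (x, y - sh b)
        - τ₁ (x - sh a, y) * d2 τ₂ x (y - sh b))
      - (τ₁ (x - sh a, y) * τ₂ (x, y - sh b)
        - τ₁ (x - sh a, y - sh b) * τ₂ (x, y)) with hFdef
  have hcd2 : Continuous fun a : ℂ => d2 τ₁ (x - sh a) y := by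
    have h := hs1.2.2.2
    have : Continuous fun a : ℂ => ((0 : ℂ), (x - sh a, y)) := by
      exact continuous_const.prodMk ((continuous_const.sub hsh).prodMk continuous_const)
    exact h.comp this
  have hcont : Continuous F := by
    apply Continuous.sub
    · apply continuous_const.mul
      apply Continuous.sub
      · exact hcd2.mul continuous_const
      · exact ((hc1.comp ((continuous_const.sub hsh).prodMk continuous_const)).mul continuous_const)
    · apply Continuous.sub
      · exact ((hc1.comp ((continuous_const.sub hsh).prodMk continuous_const)).mul continuous_const)
      · exact ((hc1.comp ((continuous_const.sub hsh).prodMk continuous_const)).mul continuous_const)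
  have hzero : ∀ a : ℂ, a ≠ 0 → F a = 0 := by
    intro a ha
    have h := hFay x (y - sh b) a b ha hb
    have hy : y - sh b + sh b = y := by funext k; simp
    rw [hy] at h
    simp only [hFdef]
    field_simp at h
    linear_combination h
  have hF0 : F 0 = 0 := by
    have hd : Dense {a : ℂ | a ≠ 0} := dense_compl_singleton 0
    have := Continuous.ext_on hd hcont continuous_const (fun a ha => hzero a ha)
    exact congrFun this 0
  simp only [hFdef, hsh0, sub_zero] at hF0
  linear_combination hF0
end
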